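/- Consider the skip-free algorithm applied to a finite recurrent MDP on S that is skip-free in the negative direction on the tree, producing sequences of policies d_n and values g_n. Then for every n: g_n = g(d_n), and either g_{n+1} < g_n (so d_{n+1} is a strict improvement on d_n), or g_{n+1} = g_n; in the latter case g_{n+1} = min over all stationary deterministic policies d' of g(d'), d_{n+1} is an average cost optimal policy, and the pair (g_{n+1}, h), where h_0 = 0 and h_j = ∑_{i∈Δ(0,j)} y_i for j ≠ 0 (with y the values computed at that iteration), satisfies the average cost optimality equations h_i = min_{a∈A} { c_i(a) − g + ∑_{j∈S} p_{ij}(a) h_j }. -/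

import Mathlib

open Finset Filter

noncomputable section

/-- A rooted tree structure on a state space `S`: a root, a parent map fixing the root,
such that iterating the parent map from any state reaches the root. -/
structure SFTree (S : Type*) where
  root : S
  parent : S → S
  parent_root : parent root = root
  reaches_root : ∀ i : S, ∃ n : ℕ, parent^[n] i = root

namespace SFTree

variable {S : Type*} [Fintype S] [DecidableEq S]

open Classical in
/-- The set of descendants of `i`: states `j ≠ i` whose path to the root passes through `i`. -/
def desc (T : SFTree S) (i : S) : Finset S :=
  Finset.univ.filter fun j => j ≠ i ∧ ∃ n : ℕ, T.parent^[n] j = i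

open Classical in
/-- The subtree rooted at `i`: `i` together with its descendants. -/
def subtree (T : SFTree S) (i : S) : Finset S :=
  Finset.univ.filter fun j => ∃ n : ℕ, T.parent^[n] j = i

open Classical in
/-- The states strictly after `i` on the path from `i` to `j`. -/
def delta (T : SFTree S) (i j : S) : Finset S :=
  Finset.univ.filter fun r =>
    r ≠ i ∧ (∃ n : ℕ, T.parent^[n] j = r) ∧ (∃ m : ℕ, T.parent^[m] r = i)

end SFTree

/-- A finite Markov decision process: costs and transition probabilities. -/
structure MDP (S A : Type*) [Fintype S] where
  c : S → A → ℝ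
  p : S → A → S → ℝ
  p_nonneg : ∀ i a j, 0 ≤ p i a j
  p_sum_one : ∀ i a, ∑ j, p i a j = 1

namespace MDP

variable {S A : Type*} [Fintype S] [DecidableEq S]

/-- Tail probability: the probability of jumping from `i` into the subtree rooted at `k`. -/
def ptail (M : MDP S A) (T : SFTree S) (i : S) (a : A) (k : S) : ℝ :=
  ∑ s ∈ T.subtree k, M.p i a s

/-- Skip-free in the negative direction on the tree `T`: from `i ≠ root` the only possible
transitions are to the parent of `i` or into the subtree rooted at `i`. -/
def IsSkipFree (M : MDP S A) (T : SFTree S) : Prop :=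
  ∀ i, i ≠ T.root → ∀ a j, M.p i a j ≠ 0 → j = T.parent i ∨ j ∈ T.subtree i

/-- Transition matrix of the stationary deterministic policy `d`. -/
def Pmat (M : MDP S A) (d : S → A) : Matrix S S ℝ :=
  Matrix.of fun i j => M.p i (d i) j

/-- Cost vector of the stationary deterministic policy `d`. -/
def cvec (M : MDP S A) (d : S → A) : S → ℝ := fun i => M.c i (d i)

/-- Expected average cost of the stationary deterministic policy `d` starting from `i`. -/
def avgCost (M : MDP S A) (d : S → A) (i : S) : ℝ :=
  Filter.limsup
    (fun n : ℕ => (n : ℝ)⁻¹ * ∑ t ∈ Finset.range n, ((M.Pmat d ^ t).mulVec (M.cvec d)) i)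
    Filter.atTop

end MDP

/-- A (substochastic) matrix is irreducible if every state can reach every other state
in a positive number of steps. -/
def MatIrreducible {S : Type*} [Fintype S] [DecidableEq S] (P : Matrix S S ℝ) : Prop :=
  ∀ i j, ∃ n : ℕ, 0 < n ∧ 0 < (P ^ n) i j

/-- A recurrent model: every stationary deterministic policy has an irreducible
transition matrix. -/
def IsRecurrentModel {S A : Type*} [Fintype S] [DecidableEq S] (M : MDP S A) : Prop :=
  ∀ d : S → A, MatIrreducible (M.Pmat d)

/-- The probability weight of a path of length `n`. -/
def pathWt {S : Type*} [Fintype S] (P : Matrix S S ℝ) {n : ℕ} (x : Fin (n + 1) → S) : ℝ :=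
  ∏ t : Fin n, P (x t.castSucc) (x t.succ)

open Classical in
/-- `E[f(X_n); τ > n]` for the chain with matrix `P` started at `z`, where `τ` is the
first-return epoch to `z` (the first time the chain enters `z` from a state `≠ z`). -/
def retTerm {S : Type*} [Fintype S] (P : Matrix S S ℝ) (z : S) (f : S → ℝ) (n : ℕ) : ℝ :=
  ∑ x ∈ Finset.univ.filter
      (fun (x : Fin (n + 1) → S) =>
        x 0 = z ∧ ∀ t : Fin n, ¬(x t.castSucc ≠ z ∧ x t.succ = z)),
    pathWt P x * f (x (Fin.last n))

/-- `E[∑_{t=0}^{τ-1} f(X_t)]` for the chain with matrix `P` started at `z`, where `τ` is the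
first-return epoch to `z`. -/
def retSum {S : Type*} [Fintype S] (P : Matrix S S ℝ) (z : S) (f : S → ℝ) : ℝ :=
  ∑' n : ℕ, retTerm P z f n

open Classical in
/-- `E[f(X_n); σ > n]` for the chain with matrix `P` started at `i`, where `σ` is the
first-passage epoch to `z`, `σ = min {t > 0 : X_t = z}`. -/
def passTerm {S : Type*} [Fintype S] (P : Matrix S S ℝ) (i z : S) (f : S → ℝ) (n : ℕ) : ℝ :=
  ∑ x ∈ Finset.univ.filter
      (fun (x : Fin (n + 1) → S) => x 0 = i ∧ ∀ t : Fin n, x t.succ ≠ z),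
    pathWt P x * f (x (Fin.last n))

/-- `E[∑_{t=0}^{σ-1} f(X_t)]` for the chain with matrix `P` started at `i`, where `σ` is the
first-passage epoch to `z`. -/
def passSum {S : Type*} [Fintype S] (P : Matrix S S ℝ) (i z : S) (f : S → ℝ) : ℝ :=
  ∑' n : ℕ, passTerm P i z f n

end

/-!
Write `h` for the potential `h_j = ∑_{k ∈ Δ(0,j)} w_k` of a vector of increments `w`. Because
the chain is skip-free, one transition of `h` from `i ≠ 0` only involves `w_i` (through the jump
to the parent) and the tail probabilities into the subtrees below `i`. So the recursions of the
algorithm say exactly that the potential of `y - u t` solves the Poisson equation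
`c = (x + u) + h - P h` of the new policy, whose average cost is therefore `x + u`, while for every
policy the potential of `y` satisfies `c ≥ x + h - P h + u 𝟙_{0}`. Averaging the latter along a
policy of cost `x`, and using that a recurrent chain spends a positive fraction of its time in `0`,
forces `u ≤ 0`. If `u = 0`, the same inequality bounds every average cost below by `x`, and
together with the Poisson equation it gives the optimality equations.
-/

open Topology

namespace SFTree

variable {S : Type*} (T : SFTree S)

lemma iterate_parent_root (n : ℕ) : T.parent^[n] T.root = T.root :=
  Function.iterate_fixed T.parent_root n

lemma iterate_parent_ne_self {i : S} (hi : i ≠ T.root) {n : ℕ} (hn : 0 < n) :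
    T.parent^[n] i ≠ i := by
  intro hper
  obtain ⟨N, hN⟩ := T.reaches_root i
  have hroot : T.parent^[n * N - N + N] i = T.root := by
    rw [Function.iterate_add_apply, hN, T.iterate_parent_root]
  rw [Nat.sub_add_cancel (Nat.le_mul_of_pos_left N hn),
    (Function.IsPeriodicPt.mul_const hper N).eq] at hroot
  exact hi hroot

variable [Fintype S]

lemma mem_subtree {i j : S} : j ∈ T.subtree i ↔ ∃ n, T.parent^[n] j = i := by
  simp [subtree]

lemma parent_notMem_subtree {i : S} (hi : i ≠ T.root) : T.parent i ∉ T.subtree i := by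
  rintro hmem
  obtain ⟨m, hm⟩ := T.mem_subtree.1 hmem
  exact T.iterate_parent_ne_self hi m.succ_pos hm

lemma subtree_root : T.subtree T.root = univ :=
  eq_univ_of_forall fun j => T.mem_subtree.2 (T.reaches_root j)

variable [DecidableEq S]

lemma mem_desc {i j : S} : j ∈ T.desc i ↔ j ≠ i ∧ ∃ n, T.parent^[n] j = i := by
  simp [desc]

lemma mem_delta {i j r : S} :
    r ∈ T.delta i j ↔ r ≠ i ∧ (∃ n, T.parent^[n] j = r) ∧ ∃ m, T.parent^[m] r = i := by
  simp [delta]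

lemma ne_root_of_mem_desc {i k : S} (hk : k ∈ T.desc i) : k ≠ T.root := by
  rintro rfl
  obtain ⟨hne, n, hn⟩ := T.mem_desc.1 hk
  exact hne ((T.iterate_parent_root n).symm.trans hn)

lemma desc_ssubset {i k : S} (hk : k ∈ T.desc i) : T.desc k ⊂ T.desc i := by
  obtain ⟨hki, m, hm⟩ := T.mem_desc.1 hk
  refine ssubset_iff_of_subset (fun j hj => ?_) |>.2 ⟨k, hk, fun hkk => (T.mem_desc.1 hkk).1 rfl⟩
  obtain ⟨hjk, n, hn⟩ := T.mem_desc.1 hj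
  refine T.mem_desc.2 ⟨?_, m + n, by rw [Function.iterate_add_apply, hn, hm]⟩
  rintro rfl
  have hn0 : 0 < n := Nat.pos_of_ne_zero fun h => hjk (by simpa [h] using hn)
  exact T.iterate_parent_ne_self (T.ne_root_of_mem_desc hk) (Nat.add_pos_left hn0 m)
    (by rw [Function.iterate_add_apply, hm, hn])

theorem desc_induction {P : S → Prop} (h : ∀ i, (∀ k ∈ T.desc i, P k) → P i) (i : S) : P i :=
  h i fun k hk =>
    have := card_lt_card (T.desc_ssubset hk)
    desc_induction h k
termination_by (T.desc i).card

lemma mem_subtree_and_mem_delta_iff {i j k : S} :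
    j ∈ T.subtree i ∧ k ∈ T.delta i j ↔ j ∈ T.subtree k ∧ k ∈ T.desc i := by
  rw [mem_subtree, mem_delta, mem_desc, mem_subtree]
  constructor
  · rintro ⟨-, hki, hpath, hreach⟩
    exact ⟨hpath, hki, hreach⟩
  · rintro ⟨⟨n, hn⟩, hki, m, hm⟩
    exact ⟨⟨m + n, by rw [Function.iterate_add_apply, hn, hm]⟩, hki, ⟨n, hn⟩, ⟨m, hm⟩⟩

lemma sum_subtree_mul_sum_delta (i : S) (f w : S → ℝ) :
    ∑ j ∈ T.subtree i, f j * ∑ k ∈ T.delta i j, w k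
      = ∑ k ∈ T.desc i, (∑ s ∈ T.subtree k, f s) * w k := by
  simp only [mul_sum, sum_mul]
  exact sum_comm' fun j k => T.mem_subtree_and_mem_delta_iff

/-- `h_j = ∑_{k ∈ Δ(0,j)} w_k`; for `w = y` this is the `h` of the optimality equations. -/
noncomputable def rootPathSum (w : S → ℝ) (j : S) : ℝ :=
  ∑ k ∈ T.delta T.root j, w k

variable (w : S → ℝ)

lemma rootPathSum_root : T.rootPathSum w T.root = 0 := by
  refine sum_eq_zero fun r hr => ?_
  obtain ⟨hne, ⟨n, hn⟩, -⟩ := T.mem_delta.1 hr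
  exact absurd ((T.iterate_parent_root n).symm.trans hn).symm hne

lemma rootPathSum_parent {i : S} (hi : i ≠ T.root) :
    T.rootPathSum w (T.parent i) = T.rootPathSum w i - w i := by
  have hi_mem : i ∈ T.delta T.root i := T.mem_delta.2 ⟨hi, ⟨0, rfl⟩, T.reaches_root i⟩
  have hdelta : T.delta T.root (T.parent i) = (T.delta T.root i).erase i := by
    ext r
    simp only [mem_erase, mem_delta]
    constructor
    · rintro ⟨hne, ⟨n, hn⟩, hr⟩
      have hni : T.parent^[n + 1] i = r := by rwa [Function.iterate_succ_apply]
      exact ⟨fun hri => T.iterate_parent_ne_self hi n.succ_pos (hri ▸ hni), hne, ⟨n + 1, hni⟩, hr⟩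
    · rintro ⟨hri, hne, ⟨_ | n, hn⟩, hr⟩
      · exact absurd hn.symm hri
      · exact ⟨hne, ⟨n, by rwa [← Function.iterate_succ_apply]⟩, hr⟩
  rw [rootPathSum, hdelta, sum_erase_eq_sub hi_mem, rootPathSum]

lemma rootPathSum_of_mem_subtree {i j : S} (hi : i ≠ T.root) (hj : j ∈ T.subtree i) :
    T.rootPathSum w j = ∑ k ∈ T.delta i j, w k + T.rootPathSum w i := by
  obtain ⟨n₀, hn₀⟩ := T.mem_subtree.1 hj
  have hdisj : Disjoint (T.delta i j) (T.delta T.root i) := by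
    refine disjoint_left.2 fun r hr₁ hr₂ => ?_
    obtain ⟨hri, -, m, hm⟩ := T.mem_delta.1 hr₁
    obtain ⟨-, ⟨q, hq⟩, -⟩ := T.mem_delta.1 hr₂
    have hm0 : 0 < m := Nat.pos_of_ne_zero fun h => hri (by simpa [h] using hm)
    have hr : r ≠ T.root := fun h => hi (by rw [← hm, h, T.iterate_parent_root])
    exact T.iterate_parent_ne_self hr (Nat.add_pos_right q hm0)
      (by rw [Function.iterate_add_apply, hm, hq])
  rw [rootPathSum, rootPathSum, ← sum_union hdisj]
  congr 1
  ext r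
  simp only [mem_union, mem_delta]
  constructor
  · rintro ⟨hr, ⟨n, hn⟩, hreach⟩
    rcases le_total n n₀ with h | h
    · by_cases hri : r = i
      · exact .inr ⟨hri ▸ hr, ⟨0, hri ▸ rfl⟩, hreach⟩
      · refine .inl ⟨hri, ⟨n, hn⟩, n₀ - n, ?_⟩
        rw [← hn, ← Function.iterate_add_apply, Nat.sub_add_cancel h, hn₀]
    · refine .inr ⟨hr, ⟨n - n₀, ?_⟩, hreach⟩
      rw [← hn₀, ← Function.iterate_add_apply, Nat.sub_add_cancel h, hn]
  · rintro (⟨hri, ⟨n, hn⟩, q, hq⟩ | ⟨hr, ⟨n, hn⟩, hreach⟩)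
    · refine ⟨fun h => hi ?_, ⟨n, hn⟩, T.reaches_root r⟩
      rw [← hq, h, T.iterate_parent_root]
    · exact ⟨hr, ⟨n + n₀, by rw [Function.iterate_add_apply, hn₀, hn]⟩, hreach⟩

end SFTree

namespace Matrix

variable {S : Type*} [Fintype S] [DecidableEq S] {P : Matrix S S ℝ}

noncomputable def cesaroMean (P : Matrix S S ℝ) (c : S → ℝ) (i : S) (n : ℕ) : ℝ :=
  (n : ℝ)⁻¹ * ∑ t ∈ range n, (P ^ t *ᵥ c) i

lemma mulVec_const_of_mem_rowStochastic (hP : P ∈ rowStochastic ℝ S) (x : ℝ) :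
    P *ᵥ (fun _ => x) = fun _ => x := by
  ext i
  simp only [mulVec, dotProduct]
  rw [← sum_mul, sum_row_of_mem_rowStochastic hP, one_mul]

lemma abs_mulVec_apply_le_norm (hP : P ∈ rowStochastic ℝ S) (v : S → ℝ) (i : S) :
    |(P *ᵥ v) i| ≤ ‖v‖ :=
  calc |(P *ᵥ v) i| ≤ ∑ j, P i j * |v j| := by
        refine (abs_sum_le_sum_abs _ _).trans_eq (sum_congr rfl fun j _ => ?_)
        rw [abs_mul, abs_of_nonneg (nonneg_of_mem_rowStochastic hP)]
    _ ≤ ∑ j, P i j * ‖v‖ :=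
        sum_le_sum fun j _ => mul_le_mul_of_nonneg_left (norm_le_pi_norm v j)
          (nonneg_of_mem_rowStochastic hP)
    _ = ‖v‖ := by rw [← sum_mul, sum_row_of_mem_rowStochastic hP, one_mul]

lemma mulVec_mono_of_mem_rowStochastic (hP : P ∈ rowStochastic ℝ S) {v w : S → ℝ}
    (hvw : v ≤ w) : P *ᵥ v ≤ P *ᵥ w := by
  intro i
  have := nonneg_mulVec_of_mem_rowStochastic hP (x := w - v) (fun j => sub_nonneg.2 (hvw j)) i
  rwa [mulVec_sub, Pi.sub_apply, sub_nonneg] at this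

lemma sum_range_pow_mulVec_sub (P : Matrix S S ℝ) (v : S → ℝ) (n : ℕ) :
    ∑ t ∈ range n, P ^ t *ᵥ (v - P *ᵥ v) = v - P ^ n *ᵥ v := by
  simp only [mulVec_sub, mulVec_mulVec, ← pow_succ]
  simpa using sum_range_sub' (fun t => P ^ t *ᵥ v) n

lemma cesaroMean_const_add_sub_add (hP : P ∈ rowStochastic ℝ S) (x : ℝ) (v r : S → ℝ)
    (i : S) {n : ℕ} (hn : n ≠ 0) :
    cesaroMean P ((fun _ => x) + (v - P *ᵥ v) + r) i n
      = x + (n : ℝ)⁻¹ * (v i - (P ^ n *ᵥ v) i) + cesaroMean P r i n := by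
  have hconst : ∀ t, P ^ t *ᵥ (fun _ => x) = fun _ => x := fun t =>
    mulVec_const_of_mem_rowStochastic (pow_mem hP t) x
  have hsum := congrFun (sum_range_pow_mulVec_sub P v n) i
  simp only [Finset.sum_apply] at hsum
  simp only [cesaroMean, mulVec_add, Pi.add_apply, sum_add_distrib, hconst, hsum, sum_const,
    card_range, nsmul_eq_mul, Pi.sub_apply]
  field_simp

lemma cesaroMean_smul (u : ℝ) (c : S → ℝ) (i : S) (n : ℕ) :
    cesaroMean P (u • c) i n = u * cesaroMean P c i n := by
  simp only [cesaroMean, mulVec_smul, Pi.smul_apply, smul_eq_mul, ← mul_sum]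
  ring

lemma cesaroMean_mono (hP : P ∈ rowStochastic ℝ S) {c c' : S → ℝ} (hc : c ≤ c') (i : S)
    (n : ℕ) : cesaroMean P c i n ≤ cesaroMean P c' i n :=
  mul_le_mul_of_nonneg_left
    (sum_le_sum fun t _ => mulVec_mono_of_mem_rowStochastic (pow_mem hP t) hc i) (by positivity)

lemma cesaroMean_le_norm (hP : P ∈ rowStochastic ℝ S) (c : S → ℝ) (i : S) (n : ℕ) :
    cesaroMean P c i n ≤ ‖c‖ := by
  rcases eq_or_ne n 0 with rfl | hn
  · simp [cesaroMean]
  calc cesaroMean P c i n ≤ (n : ℝ)⁻¹ * ∑ _t ∈ range n, ‖c‖ :=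
        mul_le_mul_of_nonneg_left (sum_le_sum fun t _ =>
          (le_abs_self _).trans (abs_mulVec_apply_le_norm (pow_mem hP t) c i)) (by positivity)
    _ = ‖c‖ := by rw [sum_const, card_range, nsmul_eq_mul]; field_simp

lemma tendsto_inv_mul_sub_pow_mulVec (hP : P ∈ rowStochastic ℝ S) (v : S → ℝ) (i : S) :
    Tendsto (fun n : ℕ => (n : ℝ)⁻¹ * (v i - (P ^ n *ᵥ v) i)) atTop (𝓝 0) := by
  refine tendsto_inv_atTop_nhds_zero_nat.zero_mul_isBoundedUnder_le
    (isBoundedUnder_of ⟨2 * ‖v‖, fun n => ?_⟩)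
  calc ‖v i - (P ^ n *ᵥ v) i‖ ≤ |v i| + |(P ^ n *ᵥ v) i| := abs_sub _ _
    _ ≤ ‖v‖ + ‖v‖ := add_le_add (norm_le_pi_norm v i) (abs_mulVec_apply_le_norm (pow_mem hP n) v i)
    _ = 2 * ‖v‖ := by ring

lemma tendsto_cesaroMean_of_eq (hP : P ∈ rowStochastic ℝ S) {c v : S → ℝ} {x : ℝ}
    (hc : c = (fun _ => x) + (v - P *ᵥ v)) (i : S) :
    Tendsto (cesaroMean P c i) atTop (𝓝 x) := by
  have hlim := (tendsto_inv_mul_sub_pow_mulVec hP v i).const_add x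
  rw [add_zero] at hlim
  refine hlim.congr' (eventually_ne_atTop 0 |>.mono fun n hn => ?_)
  rw [hc, ← add_zero ((fun _ => x) + (v - P *ᵥ v)), cesaroMean_const_add_sub_add hP x v 0 i hn]
  simp [cesaroMean]

lemma add_le_limsup_cesaroMean (hP : P ∈ rowStochastic ℝ S) {c v r : S → ℝ} {x δ : ℝ}
    (hc : (fun _ => x) + (v - P *ᵥ v) + r ≤ c) {i : S}
    (hr : ∀ᶠ n in atTop, δ ≤ cesaroMean P r i n) :
    x + δ ≤ limsup (cesaroMean P c i) atTop := by
  have hlim := ((tendsto_inv_mul_sub_pow_mulVec hP v i).const_add x).add_const δ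
  rw [add_zero] at hlim
  rw [← hlim.limsup_eq]
  refine limsup_le_limsup ?_ hlim.isBoundedUnder_ge.isCoboundedUnder_le
    (isBoundedUnder_of ⟨‖c‖, cesaroMean_le_norm hP c i⟩)
  filter_upwards [hr, eventually_ne_atTop 0] with n hδ hn
  calc x + (n : ℝ)⁻¹ * (v i - (P ^ n *ᵥ v) i) + δ
      ≤ cesaroMean P ((fun _ => x) + (v - P *ᵥ v) + r) i n := by
        rw [cesaroMean_const_add_sub_add hP x v r i hn]; gcongr
    _ ≤ cesaroMean P c i n := cesaroMean_mono hP hc i n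

lemma mul_le_card_mul_sum_range_pow_apply (hP : P ∈ rowStochastic ℝ S) {z : S} {m : S → ℕ}
    {δ : ℝ} {N : ℕ} (hδ : ∀ i, δ ≤ (P ^ m i) i z) (hN : ∀ i, m i ≤ N) (n : ℕ) :
    δ * n ≤ Fintype.card S * ∑ t ∈ range (n + N), (P ^ t) z z := by
  have hnn : ∀ t i j, 0 ≤ (P ^ t) i j := fun t _ _ => nonneg_of_mem_rowStochastic (pow_mem hP t)
  have hshift (i : S) :
      ∑ t ∈ range n, (P ^ (m i + t)) z z ≤ ∑ t ∈ range (n + N), (P ^ t) z z :=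
    calc ∑ t ∈ range n, (P ^ (m i + t)) z z ≤ ∑ t ∈ range (m i + n), (P ^ t) z z := by
          rw [sum_range_add]
          exact le_add_of_nonneg_left (sum_nonneg fun t _ => hnn _ _ _)
      _ ≤ ∑ t ∈ range (n + N), (P ^ t) z z :=
          sum_le_sum_of_subset_of_nonneg (range_subset_range.2 (by linarith [hN i]))
            fun t _ _ => hnn _ _ _
  have hrow (t : ℕ) : ∑ i, (P ^ t) z i = 1 := sum_row_of_mem_rowStochastic (pow_mem hP t) z
  -- a visit to `i` at time `t` is followed by one to `z` at time `t + m i` with probability `≥ δ`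
  calc δ * n = ∑ t ∈ range n, (∑ i, (P ^ t) z i) * δ := by
        simp only [hrow, one_mul, sum_const, card_range, nsmul_eq_mul]
        ring
    _ = ∑ t ∈ range n, ∑ i, (P ^ t) z i * δ := by simp only [sum_mul]
    _ ≤ ∑ t ∈ range n, ∑ i, (P ^ t) z i * (P ^ m i) i z := by
        gcongr with t _ i _
        exacts [hnn _ _ _, hδ i]
    _ ≤ ∑ t ∈ range n, ∑ i, (P ^ (m i + t)) z z := by
        gcongr with t _ i _
        rw [add_comm, pow_add, mul_apply]
        exact single_le_sum (f := fun k => (P ^ t) z k * (P ^ m i) k z)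
          (fun k _ => mul_nonneg (hnn _ _ _) (hnn _ _ _)) (mem_univ i)
    _ = ∑ i, ∑ t ∈ range n, (P ^ (m i + t)) z z := sum_comm
    _ ≤ ∑ _i : S, ∑ t ∈ range (n + N), (P ^ t) z z := sum_le_sum fun i _ => hshift i
    _ = Fintype.card S * ∑ t ∈ range (n + N), (P ^ t) z z := by
        rw [sum_const, card_univ, nsmul_eq_mul]

lemma exists_pos_eventually_le_cesaroMean_single (hP : P ∈ rowStochastic ℝ S)
    (hirr : MatIrreducible P) (z : S) :
    ∃ ε > 0, ∀ᶠ n in atTop, ε ≤ cesaroMean P (Pi.single z 1) z n := by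
  choose m _ hm using fun i => hirr i z
  have : Nonempty S := ⟨z⟩
  obtain ⟨i₀, hi₀⟩ := Finite.exists_min fun i => (P ^ m i) i z
  obtain ⟨i₁, hi₁⟩ := Finite.exists_max m
  have hcard : (0 : ℝ) < Fintype.card S := by exact_mod_cast Fintype.card_pos
  refine ⟨(P ^ m i₀) i₀ z / (2 * Fintype.card S), div_pos (hm i₀) (by linarith), ?_⟩
  filter_upwards [eventually_ge_atTop (2 * m i₁ + 1)] with n hn
  obtain ⟨k, rfl⟩ : ∃ k, n = k + m i₁ := ⟨n - m i₁, by omega⟩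
  have hkey := mul_le_card_mul_sum_range_pow_apply hP hi₀ hi₁ k
  have hk : (m i₁ : ℝ) + 1 ≤ k := by exact_mod_cast (by omega : m i₁ + 1 ≤ k)
  simp only [cesaroMean, mulVec_single_one, col_apply]
  rw [le_inv_mul_iff₀ (by push_cast; linarith), mul_div_assoc', div_le_iff₀ (by linarith)]
  push_cast
  nlinarith [hm i₀]

end Matrix

namespace MDP

variable {S A : Type*} [Fintype S] (M : MDP S A)

lemma ptail_nonneg (T : SFTree S) (i : S) (a : A) (k : S) : 0 ≤ M.ptail T i a k :=
  sum_nonneg fun s _ => M.p_nonneg i a s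

variable [DecidableEq S]

lemma Pmat_mem_rowStochastic (d : S → A) : M.Pmat d ∈ Matrix.rowStochastic ℝ S :=
  Matrix.mem_rowStochastic_iff_sum.2 ⟨fun i _ => M.p_nonneg i (d i) _, fun i => M.p_sum_one i (d i)⟩

lemma avgCost_eq_of_poisson {d : S → A} {x : ℝ} {h : S → ℝ}
    (hd : ∀ i, M.c i (d i) = x + h i - ∑ j, M.p i (d i) j * h j) (i : S) :
    M.avgCost d i = x := by
  refine (Matrix.tendsto_cesaroMean_of_eq (M.Pmat_mem_rowStochastic d) (v := h) ?_ i).limsup_eq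
  ext j
  rw [cvec, hd j]
  simp [Pmat, Matrix.mulVec, dotProduct]
  ring

lemma exists_pos_add_mul_le_avgCost {d : S → A} (hirr : MatIrreducible (M.Pmat d)) {x u : ℝ}
    (hu : 0 ≤ u) {h : S → ℝ} {z : S}
    (hd : ∀ i, x + h i - ∑ j, M.p i (d i) j * h j + (if i = z then u else 0) ≤ M.c i (d i)) :
    ∃ ε > 0, x + u * ε ≤ M.avgCost d z := by
  have hP := M.Pmat_mem_rowStochastic d
  obtain ⟨ε, hε, hmean⟩ := Matrix.exists_pos_eventually_le_cesaroMean_single hP hirr z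
  refine ⟨ε, hε, Matrix.add_le_limsup_cesaroMean hP (v := h) (r := u • Pi.single z 1)
    (fun i => ?_) (hmean.mono fun n hn => ?_)⟩
  · simp [Pmat, cvec, Matrix.mulVec, dotProduct, Pi.single_apply]
    linarith [hd i]
  · rw [Matrix.cesaroMean_smul]
    exact mul_le_mul_of_nonneg_left hn hu

variable (T : SFTree S)

lemma sum_p_mul_rootPathSum_root (w : S → ℝ) (a : A) :
    ∑ j, M.p T.root a j * T.rootPathSum w j = ∑ k ∈ T.desc T.root, M.ptail T T.root a k * w k := by
  have h := T.sum_subtree_mul_sum_delta T.root (M.p T.root a) w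
  rwa [T.subtree_root] at h

variable {M T}

lemma sum_p_mul_eq_of_ne_root (hsf : M.IsSkipFree T) {i : S} (hi : i ≠ T.root) (a : A)
    (f : S → ℝ) :
    ∑ j, M.p i a j * f j
      = M.p i a (T.parent i) * f (T.parent i) + ∑ j ∈ T.subtree i, M.p i a j * f j := by
  rw [← sum_insert (f := fun j => M.p i a j * f j) (T.parent_notMem_subtree hi)]
  refine (sum_subset (subset_univ _) fun j _ hj => ?_).symm
  have hp : M.p i a j = 0 := by
    by_contra hne
    rcases hsf i hi a j hne with rfl | hmem
    exacts [hj (mem_insert_self _ _), hj (mem_insert_of_mem hmem)]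
  rw [hp, zero_mul]

lemma sum_p_mul_rootPathSum_of_ne_root (hsf : M.IsSkipFree T) {i : S} (hi : i ≠ T.root)
    (w : S → ℝ) (a : A) :
    ∑ j, M.p i a j * T.rootPathSum w j
      = T.rootPathSum w i - M.p i a (T.parent i) * w i
        + ∑ k ∈ T.desc i, M.ptail T i a k * w k := by
  have hone := M.sum_p_mul_eq_of_ne_root hsf hi a fun _ => 1
  simp only [mul_one, M.p_sum_one] at hone
  rw [M.sum_p_mul_eq_of_ne_root hsf hi a, T.rootPathSum_parent w hi,
    sum_congr rfl fun j hj => by rw [T.rootPathSum_of_mem_subtree w hi hj, mul_add],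
    sum_add_distrib, T.sum_subtree_mul_sum_delta, ← sum_mul]
  simp only [ptail]
  linear_combination -(T.rootPathSum w i) * hone

end MDP

/-- The equations of one iteration of the skip-free algorithm run with `x`. -/
structure IsSkipFreeStep {S A : Type*} [Fintype S] [DecidableEq S] (T : SFTree S) (M : MDP S A)
    (x : ℝ) (y t : S → ℝ) (a : S → A) (u : ℝ) : Prop where
  y_eq_iInf : ∀ i, i ≠ T.root →
    y i = ⨅ b : A, (M.c i b - x + ∑ k ∈ T.desc i, M.ptail T i b k * y k) / M.p i b (T.parent i)
  y_eq : ∀ i, i ≠ T.root →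
    (M.c i (a i) - x + ∑ k ∈ T.desc i, M.ptail T i (a i) k * y k) / M.p i (a i) (T.parent i)
      = y i
  t_eq : ∀ i, i ≠ T.root →
    t i = (1 + ∑ k ∈ T.desc i, M.ptail T i (a i) k * t k) / M.p i (a i) (T.parent i)
  u_eq_iInf : u = ⨅ b : A,
    (M.c T.root b - x + ∑ k ∈ T.desc T.root, M.ptail T T.root b k * y k)
      / (1 + ∑ k ∈ T.desc T.root, M.ptail T T.root b k * t k)
  u_eq : (M.c T.root (a T.root) - x
        + ∑ k ∈ T.desc T.root, M.ptail T T.root (a T.root) k * y k)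
      / (1 + ∑ k ∈ T.desc T.root, M.ptail T T.root (a T.root) k * t k) = u

namespace IsSkipFreeStep

variable {S A : Type*} [Fintype S] [DecidableEq S] {T : SFTree S} {M : MDP S A} {x u : ℝ}
  {y t : S → ℝ} {a : S → A}

lemma t_pos (hs : IsSkipFreeStep T M x y t a u)
    (hpar : ∀ i, i ≠ T.root → ∀ b, 0 < M.p i b (T.parent i)) : ∀ i, i ≠ T.root → 0 < t i :=
  T.desc_induction fun i ih hi => by
    rw [hs.t_eq i hi]
    refine div_pos ?_ (hpar i hi _)
    have := sum_nonneg fun k hk =>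
      mul_nonneg (M.ptail_nonneg T i (a i) k) (ih k hk (T.ne_root_of_mem_desc hk)).le
    linarith

lemma sum_ptail_mul_t_nonneg (hs : IsSkipFreeStep T M x y t a u)
    (hpar : ∀ i, i ≠ T.root → ∀ b, 0 < M.p i b (T.parent i)) (i : S) (b : A) :
    0 ≤ ∑ k ∈ T.desc i, M.ptail T i b k * t k :=
  sum_nonneg fun k hk =>
    mul_nonneg (M.ptail_nonneg T i b k) (hs.t_pos hpar k (T.ne_root_of_mem_desc hk)).le

lemma c_eq_add_rootPathSum_sub (hs : IsSkipFreeStep T M x y t a u) (hsf : M.IsSkipFree T)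
    (hpar : ∀ i, i ≠ T.root → ∀ b, 0 < M.p i b (T.parent i)) (i : S) :
    M.c i (a i) = x + u + T.rootPathSum (y - u • t) i
      - ∑ j, M.p i (a i) j * T.rootPathSum (y - u • t) j := by
  have hsum (s : Finset S) (q : S → ℝ) :
      ∑ k ∈ s, q k * (y - u • t) k = ∑ k ∈ s, q k * y k - u * ∑ k ∈ s, q k * t k := by
    simp only [Pi.sub_apply, Pi.smul_apply, smul_eq_mul, mul_sub, sum_sub_distrib, mul_sum,
      mul_left_comm]
  by_cases hi : i = T.root
  · subst hi
    have hD : 0 < 1 + ∑ k ∈ T.desc T.root, M.ptail T T.root (a T.root) k * t k := by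
      linarith [hs.sum_ptail_mul_t_nonneg hpar T.root (a T.root)]
    rw [T.rootPathSum_root, M.sum_p_mul_rootPathSum_root, hsum]
    linear_combination (div_eq_iff hD.ne').1 hs.u_eq
  · rw [M.sum_p_mul_rootPathSum_of_ne_root hsf hi, hsum]
    have hy := (div_eq_iff (hpar i hi (a i)).ne').1 (hs.y_eq i hi)
    have ht := (eq_div_iff (hpar i hi (a i)).ne').1 (hs.t_eq i hi)
    simp only [Pi.sub_apply, Pi.smul_apply, smul_eq_mul]
    linear_combination hy + u * ht

lemma avgCost_eq (hs : IsSkipFreeStep T M x y t a u) (hsf : M.IsSkipFree T)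
    (hpar : ∀ i, i ≠ T.root → ∀ b, 0 < M.p i b (T.parent i)) (i : S) :
    M.avgCost a i = x + u :=
  M.avgCost_eq_of_poisson (hs.c_eq_add_rootPathSum_sub hsf hpar) i

variable [Fintype A]

lemma add_rootPathSum_sub_le_c (hs : IsSkipFreeStep T M x y t a u) (hsf : M.IsSkipFree T)
    (hpar : ∀ i, i ≠ T.root → ∀ b, 0 < M.p i b (T.parent i)) (i : S) (b : A) :
    x + T.rootPathSum y i - ∑ j, M.p i b j * T.rootPathSum y j
      + (if i = T.root then u * (1 + ∑ k ∈ T.desc T.root, M.ptail T T.root b k * t k) else 0)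
      ≤ M.c i b := by
  by_cases hi : i = T.root
  · subst hi
    have hu : u ≤ _ := hs.u_eq_iInf ▸ ciInf_le (Set.finite_range _).bddBelow b
    rw [le_div_iff₀ (by linarith [hs.sum_ptail_mul_t_nonneg hpar T.root b])] at hu
    rw [T.rootPathSum_root, M.sum_p_mul_rootPathSum_root, if_pos rfl]
    linarith
  · have hy : y i ≤ _ := (hs.y_eq_iInf i hi) ▸ ciInf_le (Set.finite_range _).bddBelow b
    rw [le_div_iff₀ (hpar i hi b)] at hy
    rw [M.sum_p_mul_rootPathSum_of_ne_root hsf hi, if_neg hi]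
    linarith

lemma exists_pos_add_mul_le_avgCost (hs : IsSkipFreeStep T M x y t a u) (hsf : M.IsSkipFree T)
    (hpar : ∀ i, i ≠ T.root → ∀ b, 0 < M.p i b (T.parent i)) (hrec : IsRecurrentModel M)
    (hu : 0 ≤ u) (d : S → A) : ∃ ε > 0, x + u * ε ≤ M.avgCost d T.root := by
  refine M.exists_pos_add_mul_le_avgCost (hrec d) hu (h := T.rootPathSum y) fun i => ?_
  refine le_trans ?_ (hs.add_rootPathSum_sub_le_c hsf hpar i (d i))
  split_ifs with hi
  · subst hi
    nlinarith [hs.sum_ptail_mul_t_nonneg hpar T.root (d T.root)]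
  · rfl

lemma nonpos_of_avgCost_eq (hs : IsSkipFreeStep T M x y t a u) (hsf : M.IsSkipFree T)
    (hpar : ∀ i, i ≠ T.root → ∀ b, 0 < M.p i b (T.parent i)) (hrec : IsRecurrentModel M)
    {d : S → A} (hd : M.avgCost d T.root = x) : u ≤ 0 := by
  by_contra! hu
  obtain ⟨ε, hε, hle⟩ := hs.exists_pos_add_mul_le_avgCost hsf hpar hrec hu.le d
  nlinarith

lemma le_avgCost (hs : IsSkipFreeStep T M x y t a u) (hsf : M.IsSkipFree T)
    (hpar : ∀ i, i ≠ T.root → ∀ b, 0 < M.p i b (T.parent i)) (hrec : IsRecurrentModel M)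
    (hu : u = 0) (d : S → A) : x ≤ M.avgCost d T.root := by
  obtain ⟨ε, -, hle⟩ := hs.exists_pos_add_mul_le_avgCost hsf hpar hrec hu.ge d
  rwa [hu, zero_mul, add_zero] at hle

lemma rootPathSum_eq_iInf [Nonempty A] (hs : IsSkipFreeStep T M x y t a u)
    (hsf : M.IsSkipFree T) (hpar : ∀ i, i ≠ T.root → ∀ b, 0 < M.p i b (T.parent i))
    (hu : u = 0) (i : S) :
    T.rootPathSum y i = ⨅ b : A, (M.c i b - x + ∑ j, M.p i b j * T.rootPathSum y j) := by
  subst hu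
  refine le_antisymm (le_ciInf fun b => ?_) (ciInf_le_of_le (Set.finite_range _).bddBelow (a i) ?_)
  · have := hs.add_rootPathSum_sub_le_c hsf hpar i b
    simp only [zero_mul, ite_self, add_zero] at this
    linarith
  · have := hs.c_eq_add_rootPathSum_sub hsf hpar i
    simp only [zero_smul, sub_zero, add_zero] at this
    linarith

end IsSkipFreeStep

theorem stmt10_general {S A : Type*} [Fintype S] [DecidableEq S] [Fintype A] [Nonempty A]
    (T : SFTree S) (M : MDP S A)
    (hsf : M.IsSkipFree T) (hrec : IsRecurrentModel M)
    (hpar : ∀ i, i ≠ T.root → ∀ a : A, 0 < M.p i a (T.parent i))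
    (d : ℕ → S → A) (g : ℕ → ℝ) (y t : ℕ → S → ℝ) (u : ℕ → ℝ)
    (hg0 : g 0 = M.avgCost (d 0) T.root)
    (hy : ∀ n, ∀ i, i ≠ T.root →
      y n i = ⨅ a : A, (M.c i a - g n + ∑ k ∈ T.desc i, M.ptail T i a k * y n k)
          / M.p i a (T.parent i))
    (hd : ∀ n, ∀ i, i ≠ T.root →
      (M.c i (d (n + 1) i) - g n + ∑ k ∈ T.desc i, M.ptail T i (d (n + 1) i) k * y n k)
          / M.p i (d (n + 1) i) (T.parent i) = y n i)
    (ht : ∀ n, ∀ i, i ≠ T.root →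
      t n i = (1 + ∑ k ∈ T.desc i, M.ptail T i (d (n + 1) i) k * t n k)
          / M.p i (d (n + 1) i) (T.parent i))
    (hu : ∀ n, u n = ⨅ a : A,
      (M.c T.root a - g n + ∑ k ∈ T.desc T.root, M.ptail T T.root a k * y n k)
        / (1 + ∑ k ∈ T.desc T.root, M.ptail T T.root a k * t n k))
    (hd0 : ∀ n,
      (M.c T.root (d (n + 1) T.root) - g n
          + ∑ k ∈ T.desc T.root, M.ptail T T.root (d (n + 1) T.root) k * y n k)
        / (1 + ∑ k ∈ T.desc T.root, M.ptail T T.root (d (n + 1) T.root) k * t n k) = u n)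
    (hG : ∀ n, g (n + 1) = g n + u n) :
    ∀ n : ℕ,
      g n = M.avgCost (d n) T.root
      ∧ (g (n + 1) < g n ∨ g (n + 1) = g n)
      ∧ (g (n + 1) = g n →
          (g (n + 1) = ⨅ d' : S → A, M.avgCost d' T.root)
          ∧ (M.avgCost (d (n + 1)) T.root = ⨅ d' : S → A, M.avgCost d' T.root)
          ∧ (∀ i, (∑ k ∈ T.delta T.root i, y n k)
              = ⨅ a : A, (M.c i a - g (n + 1)
                  + ∑ j, M.p i a j * (∑ k ∈ T.delta T.root j, y n k)))) := by
  have step (n : ℕ) : IsSkipFreeStep T M (g n) (y n) (t n) (d (n + 1)) (u n) :=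
    ⟨hy n, hd n, ht n, hu n, hd0 n⟩
  have hcost : ∀ n, g n = M.avgCost (d n) T.root := by
    rintro (_ | n)
    · exact hg0
    · rw [hG, (step n).avgCost_eq hsf hpar]
  intro n
  have hu_nonpos : u n ≤ 0 := (step n).nonpos_of_avgCost_eq hsf hpar hrec (hcost n).symm
  refine ⟨hcost n, (show g (n + 1) ≤ g n by linarith [hG n]).lt_or_eq, fun heq => ?_⟩
  have hu0 : u n = 0 := by linarith [hG n]
  have hmin : ⨅ d' : S → A, M.avgCost d' T.root = g (n + 1) := by
    refine le_antisymm
      (ciInf_le_of_le (Set.finite_range _).bddBelow (d (n + 1)) (hcost (n + 1)).ge)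
      (le_ciInf fun d' => heq ▸ (step n).le_avgCost hsf hpar hrec hu0 d')
  refine ⟨hmin.symm, (hcost (n + 1)).symm.trans hmin.symm, fun i => ?_⟩
  rw [heq]
  exact (step n).rootPathSum_eq_iInf hsf hpar hu0 i

/-- Theorem 1(i). For the skip-free algorithm (hypotheses encode one
iteration step with `x = g n`, producing `y n`, `t n`, the minimising policy `d (n+1)`, the
minimal value `u n`, and `g (n+1) = g n + u n`), for every `n`: `g n = g(d n)`, and either
`g (n+1) < g n` or `g (n+1) = g n`; in the latter case `g (n+1)` is the optimal average
cost, `d (n+1)` is average cost optimal, and `(g (n+1), h)` with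
`h j = ∑_{i ∈ Δ(root,j)} y n i` satisfies the average cost optimality equations. -/
theorem stmt10 {S A : Type*} [Fintype S] [DecidableEq S] [Fintype A] [Nonempty A]
    (T : SFTree S) (M : MDP S A)
    (hsf : M.IsSkipFree T) (hrec : IsRecurrentModel M)
    (h00 : ∀ a : A, M.p T.root a T.root < 1)
    (hpar : ∀ i, i ≠ T.root → ∀ a : A, 0 < M.p i a (T.parent i))
    (d : ℕ → S → A) (g : ℕ → ℝ) (y t : ℕ → S → ℝ) (u : ℕ → ℝ)
    (hg0 : g 0 = M.avgCost (d 0) T.root)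
    (hy : ∀ n, ∀ i, i ≠ T.root →
      y n i = ⨅ a : A, (M.c i a - g n + ∑ k ∈ T.desc i, M.ptail T i a k * y n k)
          / M.p i a (T.parent i))
    (hd : ∀ n, ∀ i, i ≠ T.root →
      (M.c i (d (n + 1) i) - g n + ∑ k ∈ T.desc i, M.ptail T i (d (n + 1) i) k * y n k)
          / M.p i (d (n + 1) i) (T.parent i) = y n i)
    (ht : ∀ n, ∀ i, i ≠ T.root →
      t n i = (1 + ∑ k ∈ T.desc i, M.ptail T i (d (n + 1) i) k * t n k)
          / M.p i (d (n + 1) i) (T.parent i))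
    (hu : ∀ n, u n = ⨅ a : A,
      (M.c T.root a - g n + ∑ k ∈ T.desc T.root, M.ptail T T.root a k * y n k)
        / (1 + ∑ k ∈ T.desc T.root, M.ptail T T.root a k * t n k))
    (hd0 : ∀ n,
      (M.c T.root (d (n + 1) T.root) - g n
          + ∑ k ∈ T.desc T.root, M.ptail T T.root (d (n + 1) T.root) k * y n k)
        / (1 + ∑ k ∈ T.desc T.root, M.ptail T T.root (d (n + 1) T.root) k * t n k) = u n)
    (hG : ∀ n, g (n + 1) = g n + u n) :
    ∀ n : ℕ,
      g n = M.avgCost (d n) T.root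
      ∧ (g (n + 1) < g n ∨ g (n + 1) = g n)
      ∧ (g (n + 1) = g n →
          (g (n + 1) = ⨅ d' : S → A, M.avgCost d' T.root)
          ∧ (M.avgCost (d (n + 1)) T.root = ⨅ d' : S → A, M.avgCost d' T.root)
          ∧ (∀ i, (∑ k ∈ T.delta T.root i, y n k)
              = ⨅ a : A, (M.c i a - g (n + 1)
                  + ∑ j, M.p i a j * (∑ k ∈ T.delta T.root j, y n k)))) :=
  stmt10_general T M hsf hrec hpar d g y t u hg0 hy hd ht hu hd0 hG
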